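/- arXiv:2408.07386 — 6 statements merged into one kernel-verified Lean document; each statement's English description precedes it below -/
import Mathlib

section
/- Let Z and Y be real normed vector spaces, p ∈ (1, ∞) with Hölder conjugate q ∈ (1, ∞), and let (κ_t)_{t∈ℤ₋} be a sequence of continuous linear maps from Z to Y with Σ_{t≤0} ‖κ_t‖_op^q < ∞. Then there exists a monotone sequence w : ℤ₋ → (0,1] with w_t → 0 as t → −∞ and a constant C > 0 such that for every sequence z ∈ ℓ^p(Z) one has ‖Σ_{t≤0} κ_t(z_t)‖_Y ≤ C · (Σ_{t≤0} w_t ‖z_t‖^p)^{1/p}. In particular the series Σ_{t≤0} κ_t(z_t) converges absolutely. -/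
open Filter

/-- A convolution kernel with `q`-summable operator norms gives rise to a
functional with the `p`-weighted fading memory property.  Sequences over the non-positive
integers `ℤ₋` are encoded as functions `ℕ → Z`, with index `n` corresponding to time `-n`. -/
theorem stmt0
    {Z Y : Type*} [NormedAddCommGroup Z] [NormedSpace ℝ Z]
    [NormedAddCommGroup Y] [NormedSpace ℝ Y]
    (p q : ℝ) (hpq : p.HolderConjugate q)
    (κ : ℕ → Z →L[ℝ] Y) (hκ : Summable fun n => ‖κ n‖ ^ q) :
    ∃ w : ℕ → ℝ,
      (∀ n, 0 < w n ∧ w n ≤ 1) ∧ (∀ n, w (n + 1) ≤ w n) ∧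
      Tendsto w atTop (nhds 0) ∧
      ∃ C > (0 : ℝ), ∀ z : ℕ → Z, (Summable fun n => ‖z n‖ ^ p) →
        (Summable fun n => ‖(κ n) (z n)‖) ∧
        ‖∑' n, (κ n) (z n)‖ ≤ C * (∑' n, w n * ‖z n‖ ^ p) ^ (1 / p) := by
  have hp : 0 < p := hpq.pos
  have hq : 0 < q := hpq.symm.pos
  -- augmented positive summable sequence
  set a : ℕ → ℝ := fun n => ‖κ n‖ ^ q + (1/2 : ℝ) ^ n with ha_def
  have ha_pos : ∀ n, 0 < a n := by
    intro n
    have h1 : (0:ℝ) ≤ ‖κ n‖ ^ q := Real.rpow_nonneg (norm_nonneg _) q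
    have h2 : (0:ℝ) < (1/2 : ℝ) ^ n := by positivity
    simp only [ha_def]; linarith
  have hκa : ∀ n, ‖κ n‖ ^ q ≤ a n := by
    intro n
    have h2 : (0:ℝ) ≤ (1/2 : ℝ) ^ n := by positivity
    simp only [ha_def]; linarith
  have ha_sum : Summable a :=
    hκ.add (summable_geometric_of_lt_one (by norm_num) (by norm_num))
  -- tail sums
  set R : ℕ → ℝ := fun n => ∑' k, a (k + n) with hR_def
  have hRsum : ∀ n, Summable fun k => a (k + n) := fun n => (summable_nat_add_iff n).2 ha_sum
  have hR_pos : ∀ n, 0 < R n := fun n =>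
    Summable.tsum_pos (hRsum n) (fun k => (ha_pos _).le) 0 (ha_pos _)
  have hR_rec : ∀ n, R n = a n + R (n + 1) := by
    intro n
    have := Summable.tsum_eq_zero_add (hRsum n)
    simpa [hR_def, add_assoc, add_comm, add_left_comm] using this
  have hR_anti : ∀ n, R (n + 1) ≤ R n := by
    intro n; rw [hR_rec n]; linarith [ha_pos n]
  have hR_le : ∀ n, R n ≤ R 0 := by
    intro n
    induction n with
    | zero => exact le_refl _
    | succ k ih => exact (hR_anti k).trans ih
  have hR_tendsto : Tendsto R atTop (nhds 0) := tendsto_sum_nat_add a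
  -- square roots of tails
  set b : ℕ → ℝ := fun n => Real.sqrt (R n) with hb_def
  have hb_pos : ∀ n, 0 < b n := fun n => Real.sqrt_pos.2 (hR_pos n)
  have hb_anti : ∀ n, b (n + 1) ≤ b n := fun n => Real.sqrt_le_sqrt (hR_anti n)
  have hb_tendsto : Tendsto b atTop (nhds 0) := by
    have h : Tendsto (fun x : ℝ => Real.sqrt x) (nhds 0) (nhds (Real.sqrt 0)) :=
      Real.continuous_sqrt.continuousAt
    have h' := h.comp hR_tendsto
    simp only [Real.sqrt_zero] at h'
    exact h'
  -- key estimate : a n / b n ≤ 2 (b n - b (n+1))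
  have key : ∀ n, a n * (b n)⁻¹ ≤ 2 * (b n - b (n + 1)) := by
    intro n
    have hbn := hb_pos n
    have hsq : ∀ m, b m ^ 2 = R m := fun m => Real.sq_sqrt (hR_pos m).le
    have han : a n = (b n - b (n + 1)) * (b n + b (n + 1)) := by
      have h1 : a n = R n - R (n + 1) := by linarith [hR_rec n]
      rw [h1, ← hsq n, ← hsq (n + 1)]; ring
    have h1 : a n ≤ (b n - b (n + 1)) * (2 * b n) := by
      rw [han]
      have hd : 0 ≤ b n - b (n + 1) := by linarith [hb_anti n]
      have h2 : b n + b (n + 1) ≤ 2 * b n := by linarith [hb_anti n]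
      exact mul_le_mul_of_nonneg_left h2 hd
    rw [mul_inv_le_iff₀ hbn]
    nlinarith
  have htel : Summable fun n => b n - b (n + 1) := by
    have hnn : ∀ n, 0 ≤ b n - b (n + 1) := fun n => by linarith [hb_anti n]
    refine ⟨b 0, (hasSum_iff_tendsto_nat_of_nonneg hnn _).2 ?_⟩
    have h : (fun n => ∑ i ∈ Finset.range n, (b i - b (i + 1))) = fun n => b 0 - b n := by
      funext n; exact Finset.sum_range_sub' b n
    rw [h]
    simpa using tendsto_const_nhds.sub hb_tendsto
  have hab_sum : Summable fun n => a n * (b n)⁻¹ :=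
    Summable.of_nonneg_of_le
      (fun n => mul_nonneg (ha_pos n).le (inv_nonneg.2 (hb_pos n).le))
      (fun n => key n) (htel.mul_left 2)
  -- weights
  set e : ℝ := (2 * q)⁻¹ with he_def
  have he_pos : 0 < e := by positivity
  set w : ℕ → ℝ := fun n => (R n / R 0) ^ (p * e) with hw_def
  have hpe : 0 < p * e := by positivity
  have hratio_pos : ∀ n, 0 < R n / R 0 := fun n => div_pos (hR_pos n) (hR_pos 0)
  have hratio_le : ∀ n, R n / R 0 ≤ 1 := fun n => (div_le_one (hR_pos 0)).2 (hR_le n)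
  have hw_pos : ∀ n, 0 < w n := fun n => Real.rpow_pos_of_pos (hratio_pos n) _
  have hw_le_one : ∀ n, w n ≤ 1 := fun n =>
    Real.rpow_le_one (hratio_pos n).le (hratio_le n) hpe.le
  have hw_anti : ∀ n, w (n + 1) ≤ w n := by
    intro n
    apply Real.rpow_le_rpow (hratio_pos (n + 1)).le _ hpe.le
    exact div_le_div_of_nonneg_right (hR_anti n) (hR_pos 0).le
  have hw_tendsto : Tendsto w atTop (nhds 0) := by
    have h1 : Tendsto (fun n => R n / R 0) atTop (nhds 0) := by
      simpa using hR_tendsto.div_const (R 0)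
    have h2 : ContinuousAt (fun x : ℝ => x ^ (p * e)) 0 :=
      Real.continuousAt_rpow_const 0 (p * e) (Or.inr hpe.le)
    have h3 := h2.tendsto.comp h1
    simp only [Real.zero_rpow hpe.ne'] at h3
    exact h3
  refine ⟨w, fun n => ⟨hw_pos n, hw_le_one n⟩, hw_anti, hw_tendsto, ?_⟩
  -- Hölder companion sequence
  set g : ℕ → ℝ := fun n => ‖κ n‖ * (R 0 / R n) ^ e with hg_def
  have hinv_pos : ∀ n, 0 < R 0 / R n := fun n => div_pos (hR_pos 0) (hR_pos n)
  have hg_nonneg : ∀ n, 0 ≤ g n := fun n =>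
    mul_nonneg (norm_nonneg _) (Real.rpow_pos_of_pos (hinv_pos n) e).le
  have heq2 : e * q = 1 / 2 := by
    rw [he_def]
    field_simp
  have hgq : ∀ n, g n ^ q = ‖κ n‖ ^ q * (b 0 * (b n)⁻¹) := by
    intro n
    rw [hg_def]
    rw [Real.mul_rpow (norm_nonneg _) (Real.rpow_nonneg (hinv_pos n).le e)]
    rw [← Real.rpow_mul (hinv_pos n).le, heq2]
    rw [← Real.sqrt_eq_rpow, Real.sqrt_div (hR_pos 0).le]
    rw [div_eq_mul_inv]
  have hg_sum : Summable fun n => g n ^ q := by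
    apply Summable.of_nonneg_of_le
      (fun n => Real.rpow_nonneg (hg_nonneg n) q)
      (fun n => ?_) ((hab_sum.mul_left (b 0)))
    rw [hgq n]
    have h1 : ‖κ n‖ ^ q * (b 0 * (b n)⁻¹) ≤ a n * (b 0 * (b n)⁻¹) :=
      mul_le_mul_of_nonneg_right (hκa n)
        (mul_nonneg (hb_pos 0).le (inv_nonneg.2 (hb_pos n).le))
    calc ‖κ n‖ ^ q * (b 0 * (b n)⁻¹) ≤ a n * (b 0 * (b n)⁻¹) := h1
      _ = b 0 * (a n * (b n)⁻¹) := by ring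
  set C : ℝ := (∑' n, g n ^ q) ^ (1 / q) + 1 with hC_def
  have hgq_tsum_nonneg : 0 ≤ (∑' n, g n ^ q) ^ (1 / q) :=
    Real.rpow_nonneg (tsum_nonneg fun n => Real.rpow_nonneg (hg_nonneg n) q) _
  have hC_pos : 0 < C := by rw [hC_def]; linarith
  refine ⟨C, hC_pos, fun z hz => ?_⟩
  -- the two Hölder factors
  set f : ℕ → ℝ := fun n => w n ^ (1/p) * ‖z n‖ with hf_def
  have hf_nonneg : ∀ n, 0 ≤ f n := fun n =>
    mul_nonneg (Real.rpow_pos_of_pos (hw_pos n) _).le (norm_nonneg _)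
  have hfp : ∀ n, f n ^ p = w n * ‖z n‖ ^ p := by
    intro n
    rw [hf_def]
    rw [Real.mul_rpow (Real.rpow_pos_of_pos (hw_pos n) _).le (norm_nonneg _)]
    congr 1
    rw [← Real.rpow_mul (hw_pos n).le, one_div, inv_mul_cancel₀ hp.ne', Real.rpow_one]
  have hf_sum : Summable fun n => f n ^ p := by
    apply Summable.of_nonneg_of_le (fun n => Real.rpow_nonneg (hf_nonneg n) p)
      (fun n => ?_) hz
    rw [hfp n]
    calc w n * ‖z n‖ ^ p ≤ 1 * ‖z n‖ ^ p :=
          mul_le_mul_of_nonneg_right (hw_le_one n) (Real.rpow_nonneg (norm_nonneg _) p)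
      _ = ‖z n‖ ^ p := one_mul _
  have hfg : ∀ n, f n * g n = ‖κ n‖ * ‖z n‖ := by
    intro n
    have hwp : w n ^ (1/p) = (R n / R 0) ^ e := by
      rw [hw_def]
      rw [← Real.rpow_mul (hratio_pos n).le]
      congr 1
      field_simp
    have hmul : (R n / R 0) ^ e * (R 0 / R n) ^ e = 1 := by
      rw [← Real.mul_rpow (hratio_pos n).le (hinv_pos n).le]
      have h1 : R n / R 0 * (R 0 / R n) = 1 := by
        rw [div_mul_div_comm, mul_comm, div_self (mul_pos (hR_pos 0) (hR_pos n)).ne']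
      rw [h1, Real.one_rpow]
    simp only [hf_def, hg_def]
    rw [hwp]
    calc (R n / R 0) ^ e * ‖z n‖ * (‖κ n‖ * (R 0 / R n) ^ e)
        = ((R n / R 0) ^ e * (R 0 / R n) ^ e) * (‖κ n‖ * ‖z n‖) := by ring
      _ = ‖κ n‖ * ‖z n‖ := by rw [hmul, one_mul]
  obtain ⟨hfg_sum, hfg_le⟩ :=
    Real.summable_and_inner_le_Lp_mul_Lq_tsum_of_nonneg hpq hf_nonneg hg_nonneg hf_sum hg_sum
  have hsum_norm : Summable fun n => ‖(κ n) (z n)‖ := by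
    apply Summable.of_nonneg_of_le (fun n => norm_nonneg _) (fun n => ?_) hfg_sum
    rw [hfg n]
    exact (κ n).le_opNorm (z n)
  refine ⟨hsum_norm, ?_⟩
  have hstep1 : ‖∑' n, (κ n) (z n)‖ ≤ ∑' n, ‖(κ n) (z n)‖ :=
    norm_tsum_le_tsum_norm hsum_norm
  have hstep2 : ∑' n, ‖(κ n) (z n)‖ ≤ ∑' n, f n * g n := by
    apply Summable.tsum_le_tsum _ hsum_norm hfg_sum
    intro n
    rw [hfg n]
    exact (κ n).le_opNorm (z n)
  have htsum_eq : (∑' n, f n ^ p) = ∑' n, w n * ‖z n‖ ^ p := tsum_congr hfp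
  have hwz_nonneg : 0 ≤ (∑' n, w n * ‖z n‖ ^ p) ^ (1/p) := by
    apply Real.rpow_nonneg
    exact tsum_nonneg fun n =>
      mul_nonneg (hw_pos n).le (Real.rpow_nonneg (norm_nonneg _) p)
  have hstep3 : (∑' n, f n ^ p) ^ (1/p) * (∑' n, g n ^ q) ^ (1/q)
      ≤ (∑' n, w n * ‖z n‖ ^ p) ^ (1/p) * C := by
    rw [htsum_eq]
    apply mul_le_mul_of_nonneg_left _ hwz_nonneg
    rw [hC_def]; linarith
  calc ‖∑' n, (κ n) (z n)‖ ≤ ∑' n, ‖(κ n) (z n)‖ := hstep1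
    _ ≤ ∑' n, f n * g n := hstep2
    _ ≤ (∑' n, f n ^ p) ^ (1/p) * (∑' n, g n ^ q) ^ (1/q) := hfg_le
    _ ≤ (∑' n, w n * ‖z n‖ ^ p) ^ (1/p) * C := hstep3
    _ = C * (∑' n, w n * ‖z n‖ ^ p) ^ (1/p) := mul_comm _ _
end

section
/- Let w : ℤ₋ → (0,1] be a monotone sequence with w_t → 0 as t → −∞, let Z, Y be real normed spaces, and let H : ℓ^1(Z) → Y be a linear map that is continuous with respect to the weighted norm ‖z‖_{1,w} = Σ_{t≤0} w_t ‖z_t‖. Define κ_t : Z → Y by κ_t(z) = H(δ^t(z)), where δ^t(z) is the sequence equal to z at time t and 0 elsewhere. Then each κ_t is a continuous linear map and lim_{t→−∞} ‖κ_t‖_op = 0. -/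
open Filter

instance : Fact ((1 : ENNReal) ≤ 1) := ⟨le_refl _⟩

lemma single_add' {Z : Type*} [NormedAddCommGroup Z] (n : ℕ) (a b : Z) :
    lp.single (E := fun _ : ℕ => Z) 1 n (a + b) = lp.single 1 n a + lp.single 1 n b := by
  ext j
  by_cases h : j = n
  · subst h; simp [lp.single_apply_self]
  · simp [lp.single_apply_ne _ _ _ h]

lemma wsum_single {Z : Type*} [NormedAddCommGroup Z] (w : ℕ → ℝ) (n : ℕ) (v : Z) :
    (∑' m, w m * ‖(lp.single (E := fun _ : ℕ => Z) 1 n v) m‖) = w n * ‖v‖ := by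
  rw [tsum_eq_single n]
  · rw [lp.single_apply_self]
  · intro m hm
    rw [lp.single_apply_ne _ _ _ hm, norm_zero, mul_zero]

/-- If a linear map `H : ℓ¹(Z) → Y` is continuous with respect to a weighted
`ℓ¹`-norm (with weighting sequence `w`), then the kernels `κ_t = H ∘ δ^t` are continuous
linear maps whose operator norms tend to `0` as `t → -∞`.  Sequences over `ℤ₋` are encoded as
`ℕ → Z` (index `n` is time `-n`), and `δ^t` is `lp.single`. -/
theorem stmt3
    {Z Y : Type*} [NormedAddCommGroup Z] [NormedSpace ℝ Z]
    [NormedAddCommGroup Y] [NormedSpace ℝ Y]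
    (w : ℕ → ℝ) (hw01 : ∀ n, 0 < w n ∧ w n ≤ 1) (hwmono : ∀ n, w (n + 1) ≤ w n)
    (hw0 : Tendsto w atTop (nhds 0))
    (H : lp (fun _ : ℕ => Z) 1 →ₗ[ℝ] Y)
    (hcont : ∀ ε > (0 : ℝ), ∃ η > (0 : ℝ), ∀ z : lp (fun _ : ℕ => Z) 1,
      (∑' n, w n * ‖z n‖) ≤ η → ‖H z‖ ≤ ε) :
    ∃ κ : ℕ → Z →L[ℝ] Y,
      (∀ (n : ℕ) (v : Z), (κ n) v = H (lp.single 1 n v)) ∧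
      Tendsto (fun n => ‖κ n‖) atTop (nhds 0) := by
  obtain ⟨η, hη, hbound⟩ := hcont 1 one_pos
  -- key estimate: ‖H (single n v)‖ ≤ (1/η) * w n * ‖v‖
  have key : ∀ (n : ℕ) (v : Z), ‖H (lp.single 1 n v)‖ ≤ (1 / η) * w n * ‖v‖ := by
    intro n v
    by_cases hv : v = 0
    · subst hv
      have h0 : lp.single (E := fun _ : ℕ => Z) 1 n (0 : Z) = 0 := by
        ext j
        by_cases h : j = n
        · subst h; simp [lp.single_apply_self]
        · simp [lp.single_apply_ne _ _ _ h]
      simp [h0]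
    · have hwn := (hw01 n).1
      have hvpos : 0 < ‖v‖ := norm_pos_iff.mpr hv
      have hc : 0 < η / (w n * ‖v‖) := div_pos hη (mul_pos hwn hvpos)
      set c := η / (w n * ‖v‖) with hcdef
      have hsum : (∑' m, w m * ‖(lp.single (E := fun _ : ℕ => Z) 1 n (c • v)) m‖) = η := by
        rw [wsum_single, norm_smul, Real.norm_of_nonneg hc.le]
        field_simp [hcdef]
        rw [hcdef]; field_simp
      have := hbound (lp.single 1 n (c • v)) (le_of_eq hsum)
      rw [lp.single_smul, map_smul, norm_smul, Real.norm_of_nonneg hc.le] at this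
      have h2 : ‖H (lp.single 1 n v)‖ ≤ 1 / c := by
        rw [le_div_iff₀ hc, mul_comm]
        exact this
      calc ‖H (lp.single 1 n v)‖ ≤ 1 / c := h2
        _ = (1 / η) * w n * ‖v‖ := by field_simp [hcdef]; rw [hcdef]; field_simp
  -- build the continuous linear maps
  set κ : ℕ → Z →L[ℝ] Y := fun n =>
    LinearMap.mkContinuous
      { toFun := fun v => H (lp.single 1 n v)
        map_add' := fun a b => by
          show H (lp.single 1 n (a + b)) = H (lp.single 1 n a) + H (lp.single 1 n b)
          rw [single_add', map_add]
        map_smul' := fun c a => by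
          show H (lp.single 1 n (c • a)) = c • H (lp.single 1 n a)
          rw [lp.single_smul, map_smul] }
      ((1 / η) * w n) (key n) with hκ
  refine ⟨κ, fun n v => rfl, ?_⟩
  have hnorm : ∀ n, ‖κ n‖ ≤ (1 / η) * w n := fun n =>
    LinearMap.mkContinuous_norm_le _
      (mul_nonneg (by positivity) (hw01 n).1.le) _
  have hlim : Tendsto (fun n => (1 / η) * w n) atTop (nhds 0) := by
    simpa using hw0.const_mul (1 / η)
  exact squeeze_zero (fun n => norm_nonneg _) hnorm hlim
end

section
/- Let Z, Y be real normed vector spaces and (κ_t)_{t∈ℤ₋} a sequence of continuous linear maps Z → Y such that lim_{t→−∞} ‖κ_t‖_op = 0 and κ_t ≠ 0 for infinitely many t. Then with the weighting sequence w_t = sup_{s≤t} min{1, ‖κ_s‖_op}, w is monotone, takes values in (0,1], tends to 0 as t → −∞, and ‖Σ_{t≤0} κ_t(z_t)‖_Y ≤ C · Σ_{t≤0} w_t ‖z_t‖ for all z ∈ ℓ^1(Z), where C = sup_{t≤0} max{1, ‖κ_t‖_op}. -/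
open Filter

/-!
The weight `w n` is the supremum of `min 1 ‖κ k‖` over the tail `k ≥ n`, so it is antitone, lies
in `(0, 1]` as soon as infinitely many `κ k` are nonzero, and tends to `0` with `‖κ k‖`. Since
`x = max 1 x * min 1 x`, every `‖κ n‖` is at most `C * w n`; the weighted bound then follows
termwise from `‖κ n (z n)‖ ≤ ‖κ n‖ * ‖z n‖`.
-/

/-- Index `n` stands for time `-n`, so this is the paper's weight `sup_{s ≤ -n} min{1, a_s}`. -/
noncomputable def tailSupMinOne (a : ℕ → ℝ) (n : ℕ) : ℝ := ⨆ m : ℕ, min 1 (a (n + m))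

namespace tailSupMinOne

variable (a : ℕ → ℝ)

theorem bddAbove_range (n : ℕ) : BddAbove (Set.range fun m : ℕ => min 1 (a (n + m))) :=
  ⟨1, by rintro _ ⟨m, rfl⟩; exact min_le_left _ _⟩

theorem min_one_le (n m : ℕ) : min 1 (a (n + m)) ≤ tailSupMinOne a n :=
  le_ciSup (bddAbove_range a n) m

theorem le_one (n : ℕ) : tailSupMinOne a n ≤ 1 :=
  ciSup_le fun _ => min_le_left _ _

theorem succ_le (n : ℕ) : tailSupMinOne a (n + 1) ≤ tailSupMinOne a n :=
  ciSup_le fun m => by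
    rw [Nat.add_right_comm, Nat.add_assoc]
    exact min_one_le a n (m + 1)

theorem pos {n : ℕ} (h : ∃ k ≥ n, 0 < a k) : 0 < tailSupMinOne a n := by
  obtain ⟨k, hnk, hk⟩ := h
  have hle := min_one_le a n (k - n)
  rw [Nat.add_sub_cancel' hnk] at hle
  exact (lt_min one_pos hk).trans_le hle

theorem tendsto_zero (h0 : Tendsto a atTop (nhds 0)) :
    Tendsto (tailSupMinOne a) atTop (nhds 0) := by
  refine tendsto_order.2 ⟨fun b hb => ?_, fun b hb => ?_⟩
  · have hmin : Tendsto (fun n => min 1 (a n)) atTop (nhds 0) := by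
      simpa using (tendsto_const_nhds (x := (1 : ℝ))).min h0
    filter_upwards [hmin.eventually (lt_mem_nhds hb)] with n hn
    exact hn.trans_le (by simpa using min_one_le a n 0)
  · obtain ⟨N, hN⟩ := eventually_atTop.1 (h0.eventually (gt_mem_nhds (half_pos hb)))
    filter_upwards [eventually_ge_atTop N] with n hn
    calc tailSupMinOne a n ≤ b / 2 :=
          ciSup_le fun m => (min_le_right _ _).trans (hN (n + m) (by omega)).le
      _ < b := half_lt_self hb

theorem le_iSup_max_one_mul (hnonneg : ∀ n, 0 ≤ a n) (hbdd : BddAbove (Set.range a)) (n : ℕ) :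
    a n ≤ (⨆ k : ℕ, max 1 (a k)) * tailSupMinOne a n := by
  have hCbdd : BddAbove (Set.range fun k => max 1 (a k)) := by
    obtain ⟨M, hM⟩ := hbdd
    exact ⟨max 1 M, by rintro _ ⟨k, rfl⟩; exact max_le_max le_rfl (hM ⟨k, rfl⟩)⟩
  have hmax : max 1 (a n) ≤ ⨆ k : ℕ, max 1 (a k) := le_ciSup hCbdd n
  have hsplit : max 1 (a n) * min 1 (a n) = a n := by
    rcases le_total (a n) 1 with h | h
    · rw [max_eq_left h, min_eq_right h, one_mul]
    · rw [max_eq_right h, min_eq_left h, mul_one]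
  calc a n = max 1 (a n) * min 1 (a n) := hsplit.symm
    _ ≤ (⨆ k : ℕ, max 1 (a k)) * tailSupMinOne a n :=
        mul_le_mul hmax (by simpa using min_one_le a n 0) (le_min zero_le_one (hnonneg n))
          (zero_le_one.trans ((le_max_left _ _).trans hmax))

end tailSupMinOne

namespace ContinuousLinearMap

variable {𝕜 E F : Type*} [NontriviallyNormedField 𝕜] [SeminormedAddCommGroup E]
  [NormedSpace 𝕜 E] [SeminormedAddCommGroup F] [NormedSpace 𝕜 F]
  {κ : ℕ → E →L[𝕜] F} {w : ℕ → ℝ} {C : ℝ} {z : ℕ → E}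

theorem norm_apply_le_mul_weight (hκ : ∀ n, ‖κ n‖ ≤ C * w n) (n : ℕ) :
    ‖κ n (z n)‖ ≤ C * (w n * ‖z n‖) :=
  calc ‖κ n (z n)‖ ≤ ‖κ n‖ * ‖z n‖ := (κ n).le_opNorm _
    _ ≤ C * w n * ‖z n‖ := mul_le_mul_of_nonneg_right (hκ n) (norm_nonneg _)
    _ = C * (w n * ‖z n‖) := mul_assoc _ _ _

theorem summable_norm_apply_of_weighted (hκ : ∀ n, ‖κ n‖ ≤ C * w n)
    (hwz : Summable fun n => w n * ‖z n‖) : Summable fun n => ‖κ n (z n)‖ :=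
  (hwz.mul_left C).of_nonneg_of_le (fun _ => norm_nonneg _)
    (norm_apply_le_mul_weight hκ)

theorem norm_tsum_apply_le_weighted (hκ : ∀ n, ‖κ n‖ ≤ C * w n)
    (hwz : Summable fun n => w n * ‖z n‖) :
    ‖∑' n, κ n (z n)‖ ≤ C * ∑' n, w n * ‖z n‖ :=
  calc ‖∑' n, κ n (z n)‖ ≤ ∑' n, ‖κ n (z n)‖ :=
        norm_tsum_le_tsum_norm (summable_norm_apply_of_weighted hκ hwz)
    _ ≤ ∑' n, C * (w n * ‖z n‖) :=
        (summable_norm_apply_of_weighted hκ hwz).tsum_le_tsum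
          (norm_apply_le_mul_weight hκ) (hwz.mul_left C)
    _ = C * ∑' n, w n * ‖z n‖ := tsum_mul_left

end ContinuousLinearMap

/-- If `‖κ_t‖ → 0` as `t → -∞` and `κ_t ≠ 0` for infinitely many `t`, then
`w_t = sup_{s ≤ t} min{1, ‖κ_s‖}` is a weighting sequence and the convolution functional
satisfies a `1`-weighted bound with constant `C = sup_t max{1, ‖κ_t‖}`.  Sequences over `ℤ₋`
are encoded as `ℕ → Z` (index `n` is time `-n`); thus `sup_{s ≤ t}` becomes `⨆ m, ·(n + m)`. -/
theorem stmt4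
    {Z Y : Type*} [NormedAddCommGroup Z] [NormedSpace ℝ Z]
    [NormedAddCommGroup Y] [NormedSpace ℝ Y]
    (κ : ℕ → Z →L[ℝ] Y)
    (h0 : Tendsto (fun n => ‖κ n‖) atTop (nhds 0))
    (hinf : ∀ N : ℕ, ∃ n ≥ N, κ n ≠ 0) :
    let w : ℕ → ℝ := fun n => ⨆ m : ℕ, min 1 ‖κ (n + m)‖
    let C : ℝ := ⨆ n : ℕ, max 1 ‖κ n‖
    (∀ n, w (n + 1) ≤ w n) ∧ (∀ n, 0 < w n ∧ w n ≤ 1) ∧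
    Tendsto w atTop (nhds 0) ∧
    ∀ z : ℕ → Z, (Summable fun n => ‖z n‖) →
      (Summable fun n => ‖(κ n) (z n)‖) ∧
      ‖∑' n, (κ n) (z n)‖ ≤ C * ∑' n, w n * ‖z n‖ := by
  intro w C
  set a : ℕ → ℝ := fun n => ‖κ n‖
  have hw_pos : ∀ n, 0 < w n := fun n =>
    tailSupMinOne.pos a <| (hinf n).imp fun _ ⟨hk, hne⟩ => ⟨hk, norm_pos_iff.2 hne⟩
  have hw_le_one : ∀ n, w n ≤ 1 := tailSupMinOne.le_one a
  have hκ : ∀ n, ‖κ n‖ ≤ C * w n :=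
    tailSupMinOne.le_iSup_max_one_mul a (fun _ => norm_nonneg _) h0.bddAbove_range
  refine ⟨tailSupMinOne.succ_le a, fun n => ⟨hw_pos n, hw_le_one n⟩,
    tailSupMinOne.tendsto_zero a h0, fun z hz => ?_⟩
  have hwz : Summable fun n => w n * ‖z n‖ :=
    hz.of_nonneg_of_le (fun n => mul_nonneg (hw_pos n).le (norm_nonneg _))
      (fun n => mul_le_of_le_one_left (norm_nonneg _) (hw_le_one n))
  exact ⟨ContinuousLinearMap.summable_norm_apply_of_weighted hκ hwz,
    ContinuousLinearMap.norm_tsum_apply_le_weighted hκ hwz⟩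
end

section
/- For every natural number d ≥ 1 there exists a constant c > 0 (one may take c = √2) such that for every orthant C of ℝ^d (i.e., a set of the form {v ∈ ℝ^d : ε_i v_i ≥ 0 for all i} for a fixed sign vector ε ∈ {±1}^d), every N ∈ ℕ, and all vectors v_1, …, v_N ∈ C, one has Σ_{n=1}^N ‖v_n‖ ≤ c · ‖Σ_{n=1}^N v_n‖, where ‖·‖ is the Euclidean norm. -/
/-- For every `d ≥ 1` there is a constant `c > 0` such that for every orthant `C`
of `ℝ^d` (determined by a sign vector `ε ∈ {±1}^d`) and all vectors `v_1, …, v_N ∈ C`, we have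
`Σ ‖v_n‖ ≤ c ‖Σ v_n‖` in the Euclidean norm. -/
theorem stmt5 (d : ℕ) (hd : 1 ≤ d) :
    ∃ c > (0 : ℝ),
      ∀ ε : Fin d → ℝ, (∀ i, ε i = 1 ∨ ε i = -1) →
      ∀ (N : ℕ) (v : Fin N → EuclideanSpace ℝ (Fin d)),
        (∀ n, ∀ i, 0 ≤ ε i * v n i) →
        ∑ n, ‖v n‖ ≤ c * ‖∑ n, v n‖ := by
  refine ⟨Real.sqrt d, by positivity, ?_⟩
  intro ε hε N v hv
  set E : EuclideanSpace ℝ (Fin d) := WithLp.toLp 2 (fun i => ε i) with hE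
  -- ε as a Euclidean vector
  have hnormE : ‖E‖ = Real.sqrt d := by
    rw [EuclideanSpace.norm_eq]
    congr 1
    have : ∀ i, ‖E i‖ ^ 2 = 1 := by
      intro i
      rcases hε i with h | h <;> simp [hE, h]
    simp only [this]
    simp
  -- key: |v n i| = ε i * v n i
  have habs : ∀ n i, |v n i| = ε i * v n i := by
    intro n i
    have h0 := hv n i
    rcases hε i with h | h
    · rw [h, one_mul] at h0 ⊢; exact abs_of_nonneg h0
    · rw [h, neg_one_mul] at h0 ⊢
      exact abs_of_nonpos (by linarith)
  -- ‖v n‖ ≤ ∑ i, ε i * v n i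
  have h1 : ∀ n, ‖v n‖ ≤ ∑ i, ε i * v n i := by
    intro n
    rw [EuclideanSpace.norm_eq]
    have : ∑ i, ‖v n i‖ ^ 2 ≤ (∑ i, |v n i|) ^ 2 := by
      simpa [Real.norm_eq_abs, sq_abs] using
        Finset.sum_sq_le_sq_sum_of_nonneg (s := Finset.univ)
          (fun i _ => abs_nonneg (v n i))
    calc Real.sqrt (∑ i, ‖v n i‖ ^ 2) ≤ Real.sqrt ((∑ i, |v n i|) ^ 2) :=
          Real.sqrt_le_sqrt this
      _ = ∑ i, |v n i| := Real.sqrt_sq (Finset.sum_nonneg fun i _ => abs_nonneg _)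
      _ = ∑ i, ε i * v n i := by simp [habs]
  calc ∑ n, ‖v n‖ ≤ ∑ n, ∑ i, ε i * v n i := Finset.sum_le_sum fun n _ => h1 n
    _ = (inner ℝ E (∑ n, v n) : ℝ) := by
        rw [Finset.sum_comm, PiLp.inner_apply]
        refine Finset.sum_congr rfl fun i _ => ?_
        have : (∑ n, v n) i = ∑ n, v n i := by
          induction (Finset.univ : Finset (Fin N)) using Finset.induction with
          | empty => rfl
          | insert a s h ih => rw [Finset.sum_insert h, Finset.sum_insert h, ← ih]; rfl
        simp [this, hE, Finset.sum_mul, mul_comm, Finset.mul_sum]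
    _ ≤ ‖E‖ * ‖∑ n, v n‖ := real_inner_le_norm _ _
    _ = Real.sqrt d * ‖∑ n, v n‖ := by rw [hnormE]
end

section
/- Let Z be a real normed space, d ∈ ℕ, and let (κ_t)_{t∈ℤ₋} be a sequence of continuous linear maps Z → ℝ^d. Suppose that for every z in the closed unit ball of ℓ^∞(Z), and for every subset J ⊆ ℤ₋, the limit lim_{T→−∞} Σ_{t=T, t∈J}^{0} κ_t(z_t) exists in ℝ^d. Then Σ_{t≤0} ‖κ_t‖_op < ∞. -/
open Filter

/-- Auxiliary: a real sequence whose indicator-restricted partial sums always converge is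
absolutely summable. -/
lemma aux_abs_summable (b : ℕ → ℝ)
    (h : ∀ J : Set ℕ, ∃ l : ℝ,
      Tendsto (fun N => ∑ n ∈ Finset.range (N + 1), J.indicator b n) atTop (nhds l)) :
    Summable fun n => |b n| := by
  have key : ∀ J : Set ℕ, (∀ n ∈ J, 0 ≤ b n) → Summable fun n => J.indicator b n := by
    intro J hJ
    obtain ⟨l, hl⟩ := h J
    have hnn : ∀ n, 0 ≤ J.indicator b n := fun n => by
      by_cases hn : n ∈ J
      · simp [Set.indicator_of_mem hn, hJ n hn]
      · simp [Set.indicator_of_notMem hn]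
    have hmono : Monotone fun N => ∑ n ∈ Finset.range (N + 1), J.indicator b n := by
      intro m n hmn
      exact Finset.sum_le_sum_of_subset_of_nonneg
        (Finset.range_subset_range.2 (by omega)) (fun i _ _ => hnn i)
    have hub : ∀ N, ∑ n ∈ Finset.range N, J.indicator b n ≤ l := by
      intro N
      calc ∑ n ∈ Finset.range N, J.indicator b n
          ≤ ∑ n ∈ Finset.range (N + 1), J.indicator b n :=
            Finset.sum_le_sum_of_subset_of_nonneg
              (Finset.range_subset_range.2 (by omega)) (fun i _ _ => hnn i)
        _ ≤ l := hmono.ge_of_tendsto hl N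
    exact summable_of_sum_range_le hnn hub
  have hpos : Summable fun n => ({n | 0 ≤ b n} : Set ℕ).indicator b n :=
    key {n | 0 ≤ b n} (fun n hn => hn)
  have hnegJ : ∀ n ∈ ({n | b n < 0} : Set ℕ), 0 ≤ (-b) n := fun n hn => by
    have hb : b n < 0 := hn
    simp only [Pi.neg_apply]
    linarith
  have hneg : Summable fun n => ({n | b n < 0} : Set ℕ).indicator (-b) n := by
    obtain ⟨l, hl⟩ := h {n | b n < 0}
    have hl' : Tendsto (fun N => ∑ n ∈ Finset.range (N + 1),
        ({n | b n < 0} : Set ℕ).indicator (-b) n) atTop (nhds (-l)) := by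
      have := hl.neg
      convert this using 2 with N
      rw [← Finset.sum_neg_distrib]
      congr 1 with n
      by_cases hn : n ∈ ({n | b n < 0} : Set ℕ) <;>
        simp [Set.indicator_of_mem, Set.indicator_of_notMem, hn]
    have hnn : ∀ n, 0 ≤ ({n | b n < 0} : Set ℕ).indicator (-b) n := fun n => by
      by_cases hn : n ∈ ({n | b n < 0} : Set ℕ)
      · simpa [Set.indicator_of_mem hn] using hnegJ n hn
      · simp [Set.indicator_of_notMem hn]
    have hmono : Monotone fun N => ∑ n ∈ Finset.range (N + 1),
        ({n | b n < 0} : Set ℕ).indicator (-b) n := by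
      intro m n hmn
      exact Finset.sum_le_sum_of_subset_of_nonneg
        (Finset.range_subset_range.2 (by omega)) (fun i _ _ => hnn i)
    refine summable_of_sum_range_le (c := -l) hnn (fun N => ?_)
    calc ∑ n ∈ Finset.range N, ({n | b n < 0} : Set ℕ).indicator (-b) n
        ≤ ∑ n ∈ Finset.range (N + 1), ({n | b n < 0} : Set ℕ).indicator (-b) n :=
          Finset.sum_le_sum_of_subset_of_nonneg
            (Finset.range_subset_range.2 (by omega)) (fun i _ _ => hnn i)
      _ ≤ -l := hmono.ge_of_tendsto hl' N
  have := hpos.add hneg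
  refine this.congr fun n => ?_
  by_cases hn : 0 ≤ b n
  · have hn' : ¬ b n < 0 := not_lt.2 hn
    simp [Set.indicator_apply, hn, hn', abs_of_nonneg hn]
  · have hn' : b n < 0 := lt_of_not_ge hn
    simp [Set.indicator_apply, hn, hn', abs_of_neg hn']

/-- If for every input `z` in the closed unit ball of `ℓ^∞(Z)` and every subset
`J ⊆ ℤ₋` the partial sums `Σ_{t=T, t∈J}^0 κ_t(z_t)` converge in `ℝ^d` as `T → -∞`, then the
operator norms of the kernel are summable: `Σ_{t≤0} ‖κ_t‖ < ∞`.  Sequences over `ℤ₋` are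
encoded as `ℕ → Z` (index `n` is time `-n`). -/
theorem stmt6
    {Z : Type*} [NormedAddCommGroup Z] [NormedSpace ℝ Z] (d : ℕ)
    (κ : ℕ → Z →L[ℝ] EuclideanSpace ℝ (Fin d))
    (hconv : ∀ z : ℕ → Z, (∀ n, ‖z n‖ ≤ 1) → ∀ J : Set ℕ,
      ∃ L : EuclideanSpace ℝ (Fin d),
        Tendsto (fun N => ∑ n ∈ Finset.range (N + 1),
          J.indicator (fun m => (κ m) (z m)) n) atTop (nhds L)) :
    Summable fun n => ‖κ n‖ := by
  -- choose near-optimal unit vectors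
  have hz : ∀ n, ∃ x : Z, ‖x‖ ≤ 1 ∧ ‖κ n‖ ≤ 2 * ‖κ n x‖ := by
    intro n
    by_cases h : κ n = 0
    · exact ⟨0, by simp [h]⟩
    · have hpos : 0 < ‖κ n‖ := norm_pos_iff.2 h
      obtain ⟨x, hx1, hx2⟩ := (κ n).exists_lt_apply_of_lt_opNorm (r := ‖κ n‖ / 2)
        (by linarith)
      exact ⟨x, hx1.le, by linarith⟩
  choose z hz1 hz2 using hz
  set a : ℕ → EuclideanSpace ℝ (Fin d) := fun n => κ n (z n) with ha
  -- coordinatewise absolute summability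
  have hcoord : ∀ i : Fin d, Summable fun n => |a n i| := by
    intro i
    apply aux_abs_summable
    intro J
    obtain ⟨L, hL⟩ := hconv z hz1 J
    refine ⟨L i, ?_⟩
    have hcont : Continuous fun x : EuclideanSpace ℝ (Fin d) => x i :=
      (EuclideanSpace.proj (𝕜 := ℝ) i).continuous
    have := (hcont.tendsto L).comp hL
    convert this using 2 with N
    simp only [Function.comp_apply]
    have hsa : ((∑ n ∈ Finset.range (N + 1),
        J.indicator (fun m => (κ m) (z m)) n) i)
        = ∑ n ∈ Finset.range (N + 1), (J.indicator (fun m => (κ m) (z m)) n) i :=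
      by rw [WithLp.ofLp_sum, Finset.sum_apply]
    rw [hsa]
    congr 1 with n
    by_cases hn : n ∈ J <;>
      simp [Set.indicator_of_mem, Set.indicator_of_notMem, hn, ha]
  -- ‖a n‖ ≤ ∑ i |a n i|
  have hnorm_le : ∀ n, ‖a n‖ ≤ ∑ i : Fin d, |a n i| := by
    intro n
    rw [EuclideanSpace.norm_eq]
    have h1 : ∑ i : Fin d, (a n i) ^ 2 ≤ (∑ i : Fin d, |a n i|) ^ 2 := by
      calc ∑ i : Fin d, (a n i) ^ 2 = ∑ i : Fin d, |a n i| ^ 2 := by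
            simp [sq_abs]
        _ ≤ (∑ i : Fin d, |a n i|) ^ 2 :=
            Finset.sum_sq_le_sq_sum_of_nonneg (fun i _ => abs_nonneg _)
    calc Real.sqrt (∑ i : Fin d, ‖a n i‖ ^ 2)
        = Real.sqrt (∑ i : Fin d, (a n i) ^ 2) := by simp [Real.norm_eq_abs, sq_abs]
      _ ≤ Real.sqrt ((∑ i : Fin d, |a n i|) ^ 2) := Real.sqrt_le_sqrt h1
      _ = ∑ i : Fin d, |a n i| := Real.sqrt_sq (Finset.sum_nonneg fun i _ => abs_nonneg _)
  have hsum : Summable fun n => ∑ i : Fin d, |a n i| :=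
    summable_sum fun i _ => hcoord i
  have hA : Summable fun n => ‖a n‖ :=
    Summable.of_nonneg_of_le (fun n => norm_nonneg _) hnorm_le hsum
  refine Summable.of_nonneg_of_le (fun n => norm_nonneg _) (fun n => ?_) (hA.mul_left 2)
  exact (hz2 n).trans (by rfl)
end

section
/- Let Z be a real normed space and Y a real normed space, and let H : span(𝒵) → Y be a linear map on a linear subspace 𝒵-span of Z^{ℤ₋} containing all finitely supported sequences. Suppose (a) for each t ∈ ℤ₋ the map z ↦ H(δ^t(z)) is continuous on the unit ball of Z, and (b) for every z in the domain, H(τ_T(z)) → H(z) as T → −∞, where τ_T(z) is the truncation to times [T,0]. Then, setting κ_t(z) = H(δ^t(z)), each κ_t is a continuous linear map Z → Y and H(z) = lim_{T→−∞} Σ_{t=T}^{0} κ_t(z_t) for all z in the domain. -/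
open Filter

lemma single_finite_support {Z : Type*} [Zero Z] (t : ℕ) (v : Z) :
    {n : ℕ | (Pi.single t v : ℕ → Z) n ≠ 0}.Finite := by
  apply (Set.finite_singleton t).subset
  intro n hn
  by_contra h
  simp only [Set.mem_singleton_iff] at h
  exact hn (by simp [Pi.single_apply, h])


lemma trunc_finite_support {Z : Type*} [Zero Z] (z : ℕ → Z) (N : ℕ) :
    {n : ℕ | (if n ≤ N then z n else 0) ≠ 0}.Finite := by
  apply (Set.finite_Iic N).subset
  intro n hn
  by_contra h
  simp only [Set.mem_Iic, not_le] at h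
  exact hn (if_neg (by omega))

/-- Let `H` be a linear map defined on a subspace `D` of `Z^{ℤ₋}` containing all
finitely supported sequences.  If (a) `z ↦ H(δ^t(z))` is continuous on the unit ball of `Z` for
every `t` (minimal continuity) and (b) `H(τ_T(z)) → H(z)` as `T → -∞` for every `z ∈ D`
(minimal FMP), then with `κ_t := H ∘ δ^t`, each `κ_t` is a continuous linear map and
`H(z) = lim_{T→-∞} Σ_{t=T}^0 κ_t(z_t)` (formal convolution representation).  Sequences over
`ℤ₋` are encoded as `ℕ → Z`, with `δ^t = Pi.single t` and truncation `[T,0] = ` indices `≤ N`. -/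
theorem stmt12
    {Z Y : Type*} [NormedAddCommGroup Z] [NormedSpace ℝ Z]
    [NormedAddCommGroup Y] [NormedSpace ℝ Y]
    (D : Submodule ℝ (ℕ → Z))
    (hfin : ∀ z : ℕ → Z, {n : ℕ | z n ≠ 0}.Finite → z ∈ D)
    (H : D →ₗ[ℝ] Y)
    (hcont : ∀ t : ℕ, ContinuousOn
      (fun v : Z => H ⟨Pi.single t v, hfin _ (single_finite_support t v)⟩)
      (Metric.closedBall 0 1))
    (hfmp : ∀ z : D, Tendsto
      (fun N : ℕ => H ⟨fun n => if n ≤ N then (z : ℕ → Z) n else 0,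
        hfin _ (trunc_finite_support _ N)⟩) atTop (nhds (H z))) :
    ∃ κ : ℕ → Z →L[ℝ] Y,
      (∀ (t : ℕ) (v : Z), (κ t) v = H ⟨Pi.single t v, hfin _ (single_finite_support t v)⟩) ∧
      ∀ z : D, Tendsto (fun N : ℕ => ∑ t ∈ Finset.range (N + 1), (κ t) ((z : ℕ → Z) t))
        atTop (nhds (H z)) := by

  classical
  have hlin : ∀ t : ℕ, ∃ κt : Z →ₗ[ℝ] Y,
      ∀ v, κt v = H ⟨Pi.single t v, hfin _ (single_finite_support t v)⟩ := by
    intro t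
    refine ⟨{ toFun := fun v => H ⟨Pi.single t v, hfin _ (single_finite_support t v)⟩,
              map_add' := ?_, map_smul' := ?_ }, fun v => rfl⟩
    · intro u v
      rw [← map_add]
      refine congrArg H (Subtype.ext ?_)
      ext n
      simp [Pi.single_add]
    · intro c v
      rw [← map_smul]
      refine congrArg H (Subtype.ext ?_)
      ext n
      simp [Pi.single_smul]
  choose κlin hκlin using hlin
  have hcontt : ∀ t : ℕ, Continuous (κlin t) := by
    intro t
    apply continuous_of_continuousAt_zero (κlin t)
    have h0 : ContinuousWithinAt (κlin t) (Metric.closedBall 0 1) 0 := by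
      have := (hcont t).continuousWithinAt (Metric.mem_closedBall_self zero_le_one)
      convert this using 1
      ext v
      exact hκlin t v
    exact h0.continuousAt (Metric.closedBall_mem_nhds 0 one_pos)
  refine ⟨fun t => ⟨κlin t, hcontt t⟩, fun t v => hκlin t v, ?_⟩
  intro z
  have key : ∀ N : ℕ, ∑ t ∈ Finset.range (N + 1), (κlin t) ((z : ℕ → Z) t)
      = H ⟨fun n => if n ≤ N then (z : ℕ → Z) n else 0,
            hfin _ (trunc_finite_support _ N)⟩ := by
    intro N
    have heq : (⟨fun n => if n ≤ N then (z : ℕ → Z) n else 0,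
          hfin _ (trunc_finite_support _ N)⟩ : D)
        = ∑ t ∈ Finset.range (N + 1),
            (⟨Pi.single t ((z : ℕ → Z) t), hfin _ (single_finite_support t _)⟩ : D) := by
      apply Subtype.ext
      rw [Submodule.coe_sum]
      ext n
      rw [Finset.sum_apply]
      have : ∀ t ∈ Finset.range (N + 1),
          (Pi.single t ((z : ℕ → Z) t) : ℕ → Z) n = if n = t then (z : ℕ → Z) t else 0 := by
        intro t _
        simp [Pi.single_apply]
      rw [Finset.sum_congr rfl this, Finset.sum_ite_eq]
      simp [Nat.lt_succ_iff]
    rw [heq, map_sum]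
    exact Finset.sum_congr rfl fun t _ => hκlin t _
  refine Tendsto.congr (fun N => ?_) (hfmp z)
  exact (key N).symm
end
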